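/- arXiv:2309.13642 — 2 statements merged into one kernel-verified Lean document; each statement's English description precedes it below -/
import Mathlib

section
/- Let R be a *-ring and let a ∈ R be both group invertible and Moore–Penrose invertible. Then a is an SEP element if and only if a(a#)*a⁺ is a right a-idempotent, i.e. (a(a#)*a⁺)² = a(a#)*a⁺ · a. -/
/-!
Write `x = a (a#)* a⁺`. Left-multiplying `x² = x a` by `a⁺` and then by `(a*)²`, and using that
`(a#)*` is the group inverse of `a*`, gives `a⁺ = a* a⁺ a`. So `a⁺ ∈ R a`, which forces
`a a⁺ = a a#`; then `a a#` is hermitian and `a` is EP, i.e. `a⁺ = a#` commutes with `a`, and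
`a⁺ = a* (a a⁺) = a*`. Conversely, if `a* = a#` then `x = a² a# = a`.
-/

section

variable {R : Type*}

structure IsGroupInverse [Mul R] (a x : R) : Prop where
  mul_inv_mul : a * x * a = a
  inv_mul_inv : x * a * x = x
  comm : a * x = x * a

structure IsMoorePenroseInverse [Mul R] [Star R] (a x : R) : Prop where
  mul_inv_mul : a * x * a = a
  inv_mul_inv : x * a * x = x
  isSelfAdjoint_mul_inv : IsSelfAdjoint (a * x)
  isSelfAdjoint_inv_mul : IsSelfAdjoint (x * a)

namespace IsGroupInverse

variable [Semigroup R] {a x : R}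

theorem mul_mul_inv (h : IsGroupInverse a x) : a * a * x = a := by
  rw [mul_assoc, h.comm, ← mul_assoc, h.mul_inv_mul]

theorem inv_mul_self_mul (h : IsGroupInverse a x) : x * x * a = x := by
  rw [mul_assoc, ← h.comm, ← mul_assoc, h.inv_mul_inv]

theorem star [StarMul R] (h : IsGroupInverse a x) : IsGroupInverse (star a) (star x) where
  mul_inv_mul := by rw [← star_mul, ← star_mul, ← mul_assoc, h.mul_inv_mul]
  inv_mul_inv := by rw [← star_mul, ← star_mul, ← mul_assoc, h.inv_mul_inv]
  comm := by rw [← star_mul, ← star_mul, h.comm]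

theorem mul_eq_mul_of_eq_mul {z c : R} (h : IsGroupInverse a x) (hza : a * z * a = a)
    (hz : z = c * a) : a * z = a * x :=
  calc a * z = a * c * (a * a * x) := by rw [h.mul_mul_inv, hz, mul_assoc]
    _ = a * z * a * x := by simp only [hz, mul_assoc]
    _ = a * x := by rw [hza]

end IsGroupInverse

namespace IsMoorePenroseInverse

variable [Semigroup R] [StarMul R] {a x y : R}

theorem star_mul_mul_inv (h : IsMoorePenroseInverse a x) : star a * (a * x) = star a := by
  conv_rhs => rw [← h.mul_inv_mul, star_mul, h.isSelfAdjoint_mul_inv.star_eq]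

theorem star_inv_mul_inv_mul (h : IsMoorePenroseInverse a x) : star x * (x * a) = star x := by
  conv_rhs => rw [← h.inv_mul_inv, star_mul, h.isSelfAdjoint_inv_mul.star_eq]

theorem eq_star_mul_mul_of_sq_eq (h : IsMoorePenroseInverse a x) (g : IsGroupInverse a y)
    (hC : a * star y * x * (a * star y * x) = a * star y * x * a) : x = star a * x * a := by
  set b := star y
  have hb : IsGroupInverse (star a) b := g.star
  have hbx : star a * b * x = x := by
    have : star x * (y * a) = star x :=
      calc star x * (y * a) = star x * (x * a) * (y * a) := by rw [h.star_inv_mul_inv_mul]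
        _ = star x * x * (a * y * a) := by simp only [mul_assoc]
        _ = star x := by rw [g.mul_inv_mul, mul_assoc, h.star_inv_mul_inv_mul]
    simpa only [star_mul, star_star, mul_assoc] using congrArg star this
  have hxb : x * a * b = b := by
    have : y * (x * a) = y :=
      calc y * (x * a) = y * y * a * (x * a) := by rw [g.inv_mul_self_mul]
        _ = y * y * (a * x * a) := by simp only [mul_assoc]
        _ = y := by rw [h.mul_inv_mul, g.inv_mul_self_mul]
    simpa only [star_mul, h.isSelfAdjoint_inv_mul.star_eq, mul_assoc] using congrArg star this
  have hsq : b * b * x = b * x * a :=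
    calc b * b * x = x * a * b * (x * a * b) * x := by rw [hxb]
      _ = x * (a * b * x * (a * b * x)) := by simp only [mul_assoc]
      _ = x * a * b * x * a := by rw [hC]; simp only [mul_assoc]
      _ = b * x * a := by rw [hxb]
  calc x = star a * b * x := hbx.symm
    _ = star a * star a * b * b * x := by rw [hb.mul_mul_inv]
    _ = star a * star a * (b * x * a) := by rw [← hsq]; simp only [mul_assoc]
    _ = star a * x * a := by rw [← mul_assoc, ← mul_assoc, hb.mul_mul_inv]

theorem eq_of_mul_eq_mul (h : IsMoorePenroseInverse a x) (g : IsGroupInverse a y)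
    (hxy : a * x = a * y) : x = y := by
  have hp : IsSelfAdjoint (a * y) := hxy ▸ h.isSelfAdjoint_mul_inv
  have hq : x * a * (a * y) = x * a := by rw [mul_assoc x, ← mul_assoc a, g.mul_mul_inv]
  have hpq : a * y * (x * a) = a * y := by
    rw [g.comm, mul_assoc, ← mul_assoc a, h.mul_inv_mul]
  have hxa : x * a = a * y :=
    calc x * a = star (x * a * (a * y)) := by rw [hq, h.isSelfAdjoint_inv_mul.star_eq]
      _ = a * y := by
        rw [star_mul, hp.star_eq, h.isSelfAdjoint_inv_mul.star_eq, hpq]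
  calc x = x * (a * y) := by rw [← hxy, ← mul_assoc, h.inv_mul_inv]
    _ = y := by rw [← mul_assoc, hxa, g.comm, g.inv_mul_inv]

theorem star_eq_of_eq_star_mul_mul (h : IsMoorePenroseInverse a x) (hc : a * x = x * a)
    (hx : x = star a * x * a) : star a = x := by
  rw [mul_assoc, ← hc, h.star_mul_mul_inv] at hx
  exact hx.symm

end IsMoorePenroseInverse

end

theorem stmt_10 (R : Type*) [Ring R] [StarRing R] (a ap ag : R)
    (h1 : a * ap * a = a) (h2 : ap * a * ap = ap)
    (h3 : star (a * ap) = a * ap) (h4 : star (ap * a) = ap * a)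
    (g1 : a * ag * a = a) (g2 : ag * a * ag = ag) (g3 : a * ag = ag * a) :
    (star a = ap ∧ ap = ag) ↔ (a * star ag * ap) * (a * star ag * ap) = (a * star ag * ap) * a := by
  have hmp : IsMoorePenroseInverse a ap := ⟨h1, h2, h3, h4⟩
  have hgi : IsGroupInverse a ag := ⟨g1, g2, g3⟩
  constructor
  · rintro ⟨rfl, rfl⟩
    rw [star_star, hgi.mul_mul_inv]
  · intro hC
    have hD := hmp.eq_star_mul_mul_of_sq_eq hgi hC
    obtain rfl : ap = ag := hmp.eq_of_mul_eq_mul hgi (hgi.mul_eq_mul_of_eq_mul h1 hD)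
    exact ⟨hmp.star_eq_of_eq_star_mul_mul g3 hD, rfl⟩
end

section
/- Let R be a *-ring and let a ∈ R be both group invertible and Moore–Penrose invertible. Then a is an SEP element if and only if (a(a#)*a⁺)^k is a left ((a⁺a²)^k)-idempotent for k = 2 and k = 3, i.e. (a(a#)*a⁺)^(2k) = (a⁺a²)^k (a(a#)*a⁺)^k for k = 2, 3. -/
/-!
Write `u = a (a#)* a⁺`, `c = a⁺ a²` and `P = a a*`. Since `(a#)*` is the group inverse of `a*`
and `a⁺ a a* = a*`, we have `u P = P (a#)*`; multiplying `u^(2k) = c^k u^k` on the right by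
`P (a*)^(2k)` therefore gives `P = c^k P (a*)^k`. For `k = 2` and `k = 3` this yields
`P = c (c² P (a*)²) a* = c P a*`, and cancelling with `a⁺` and `a#` turns this into
`P = a* (a#)*`, i.e. the Hermitian element `a a*` equals the idempotent `a# a`. Then
`a* = a* (a#)* a* = a#`, so `a a* a = a`, and uniqueness of the Moore–Penrose inverse gives
`a⁺ = a*`. Conversely, if `a* = a⁺ = a#` then `u = c = a`.
-/

section

variable {R : Type*}

structure IsMoorePenroseInverse_s14 [Mul R] [Star R] (a x : R) : Prop where
  mul_inv_mul : a * x * a = a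
  inv_mul_inv : x * a * x = x
  star_mul_inv : star (a * x) = a * x
  star_inv_mul : star (x * a) = x * a

structure IsGroupInverse_s14 [Mul R] (a x : R) : Prop where
  mul_inv_mul : a * x * a = a
  inv_mul_inv : x * a * x = x
  commute : Commute a x

namespace IsMoorePenroseInverse_s14

variable [Semigroup R] [StarMul R] {a x y : R}

theorem inv_mul_mul_star (h : IsMoorePenroseInverse_s14 a x) : x * a * star a = star a := by
  rw [← h.star_inv_mul, ← star_mul, ← mul_assoc, h.mul_inv_mul]

theorem mul_inv_eq (hx : IsMoorePenroseInverse_s14 a x) (hy : IsMoorePenroseInverse_s14 a y) :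
    a * x = a * y :=
  calc a * x = star (a * x) := hx.star_mul_inv.symm
    _ = star (a * y * (a * x)) := by rw [← mul_assoc, hy.mul_inv_mul]
    _ = a * x * (a * y) := by rw [star_mul, hx.star_mul_inv, hy.star_mul_inv]
    _ = a * y := by rw [← mul_assoc, hx.mul_inv_mul]

theorem inv_mul_eq (hx : IsMoorePenroseInverse_s14 a x) (hy : IsMoorePenroseInverse_s14 a y) :
    x * a = y * a :=
  calc x * a = star (x * a) := hx.star_inv_mul.symm
    _ = star (x * a * (y * a)) := by rw [mul_assoc x, ← mul_assoc a, hy.mul_inv_mul]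
    _ = y * a * (x * a) := by rw [star_mul, hx.star_inv_mul, hy.star_inv_mul]
    _ = y * a := by rw [mul_assoc, ← mul_assoc a, hx.mul_inv_mul]

theorem unique (hx : IsMoorePenroseInverse_s14 a x) (hy : IsMoorePenroseInverse_s14 a y) : x = y :=
  calc x = x * a * x := hx.inv_mul_inv.symm
    _ = y * (a * y) := by rw [hx.inv_mul_eq hy, mul_assoc, hx.mul_inv_eq hy]
    _ = y := by rw [← mul_assoc, hy.inv_mul_inv]

theorem star_of_mul_star_mul (h : a * star a * a = a) : IsMoorePenroseInverse_s14 a (star a) where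
  mul_inv_mul := h
  inv_mul_inv := by simpa only [star_mul, star_star, mul_assoc] using congrArg star h
  star_mul_inv := by rw [star_mul, star_star]
  star_inv_mul := by rw [star_mul, star_star]

end IsMoorePenroseInverse_s14

namespace IsGroupInverse_s14

variable [Semigroup R] {a x : R}

theorem inv_mul_mul_self (h : IsGroupInverse_s14 a x) : x * a * a = a := by
  rw [← h.commute.eq, h.mul_inv_mul]

theorem mul_mul_inv_self (h : IsGroupInverse_s14 a x) : a * a * x = a := by
  rw [mul_assoc, h.commute.eq, ← mul_assoc, h.mul_inv_mul]

theorem inv_mul_inv_mul_self (h : IsGroupInverse_s14 a x) : x * x * a = x := by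
  rw [mul_assoc, ← h.commute.eq, ← mul_assoc, h.inv_mul_inv]

theorem mul_left_cancel (h : IsGroupInverse_s14 a x) {y z : R} (hyz : a * (a * y) = a * (a * z)) :
    a * y = a * z := by
  have hx : ∀ w, x * (a * (a * w)) = a * w := fun w => by
    rw [← mul_assoc, ← mul_assoc, h.inv_mul_mul_self]
  rw [← hx y, hyz, hx]

theorem star_star [StarMul R] (h : IsGroupInverse_s14 a x) : IsGroupInverse_s14 (star a) (star x) where
  mul_inv_mul := by simpa only [star_mul, mul_assoc] using congrArg Star.star h.mul_inv_mul
  inv_mul_inv := by simpa only [star_mul, mul_assoc] using congrArg Star.star h.inv_mul_inv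
  commute := h.commute.star_star

end IsGroupInverse_s14

theorem eq_mul_mul_of_consecutive_pows {M : Type*} [Monoid M] {x c s : M} {n : ℕ}
    (hn : x = c ^ n * x * s ^ n) (hn_succ : x = c ^ (n + 1) * x * s ^ (n + 1)) :
    x = c * x * s :=
  calc x = c ^ (n + 1) * x * s ^ (n + 1) := hn_succ
    _ = c * (c ^ n * x * s ^ n) * s := by rw [pow_succ' c, pow_succ s]; simp only [mul_assoc]
    _ = c * x * s := by rw [← hn]

variable [Monoid R] [StarMul R] {a ap ag : R}

theorem IsMoorePenroseInverse_s14.semiconjBy_mul_star (hp : IsMoorePenroseInverse_s14 a ap)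
    (hg : IsGroupInverse_s14 a ag) : SemiconjBy (a * star a) (star ag) (a * star ag * ap) :=
  calc a * star a * star ag = a * (star ag * star a) := by rw [mul_assoc, hg.star_star.commute.eq]
    _ = a * star ag * ap * (a * star a) := by
      simp only [mul_assoc]; rw [← mul_assoc ap, hp.inv_mul_mul_star]

theorem IsGroupInverse_s14.mul_star_mul_pow_star_eq (hg : IsGroupInverse_s14 a ag) (n : ℕ) :
    a * star a * (star ag * star a) ^ n = a * star a := by
  induction n with
  | zero => rw [pow_zero, mul_one]
  | succ n ih =>
    rw [pow_succ, ← mul_assoc, ih, mul_assoc a, ← mul_assoc (star a), hg.star_star.mul_inv_mul]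

theorem IsMoorePenroseInverse_s14.mul_star_eq_of_pow_eq (hp : IsMoorePenroseInverse_s14 a ap)
    (hg : IsGroupInverse_s14 a ag) {k : ℕ}
    (h : (a * star ag * ap) ^ (2 * k) = (ap * a * a) ^ k * (a * star ag * ap) ^ k) :
    a * star a = (ap * a * a) ^ k * (a * star a) * star a ^ k := by
  have hu (n : ℕ) := ((hp.semiconjBy_mul_star hg).pow_right n).eq
  have hfix (n : ℕ) : a * star a * star ag ^ n * star a ^ n = a * star a := by
    rw [mul_assoc, ← hg.star_star.commute.symm.mul_pow, hg.mul_star_mul_pow_star_eq]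
  calc a * star a = a * star a * star ag ^ (2 * k) * star a ^ (2 * k) := (hfix _).symm
    _ = (ap * a * a) ^ k * (a * star ag * ap) ^ k * (a * star a) * star a ^ (2 * k) := by
      rw [hu, h]
    _ = (ap * a * a) ^ k * (a * star a * star ag ^ k * star a ^ k) * star a ^ k := by
      rw [mul_assoc _ _ (a * star a), ← hu, two_mul, pow_add]; simp only [mul_assoc]
    _ = (ap * a * a) ^ k * (a * star a) * star a ^ k := by rw [hfix]

theorem IsMoorePenroseInverse_s14.mul_star_eq_star_mul_star (hp : IsMoorePenroseInverse_s14 a ap)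
    (hg : IsGroupInverse_s14 a ag) (h : a * star a = ap * a * a * (a * star a) * star a) :
    a * star a = star a * star ag := by
  have hcancel : a * star a = a * (a * star a * star a) := hg.mul_left_cancel <|
    calc a * (a * star a) = a * (ap * a * a * (a * star a) * star a) := by rw [← h]
      _ = a * (a * (a * star a * star a)) := by simp only [← mul_assoc, hp.mul_inv_mul]
  have hshift : a * star a * star ag = a * (a * star a) :=
    calc a * star a * star ag = a * a * (star a * star a * star ag) := by
          rw [hcancel]; simp only [mul_assoc]
      _ = a * (a * star a) := by rw [hg.star_star.mul_mul_inv_self, mul_assoc]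
  symm
  calc star a * star ag = ap * (a * star a * star ag) := by
        rw [← mul_assoc, ← mul_assoc, hp.inv_mul_mul_star]
    _ = ap * a * (a * (a * star a * star a)) := by rw [hshift, ← hcancel, mul_assoc]
    _ = ap * a * a * (a * star a) * star a := by simp only [mul_assoc]
    _ = a * star a := h.symm

theorem IsGroupInverse_s14.star_eq_of_mul_star_eq (hg : IsGroupInverse_s14 a ag)
    (h : a * star a = star a * star ag) : star a = ag := by
  have h' : a * star a = ag * a := by simpa only [star_mul, _root_.star_star] using congrArg star h
  calc star a = star a * star ag * star a := hg.star_star.mul_inv_mul.symm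
    _ = ag * (ag * a) := by rw [← h, h', mul_assoc, h']
    _ = ag := by rw [← mul_assoc, hg.inv_mul_inv_mul_self]

theorem IsMoorePenroseInverse_s14.eq_star (hp : IsMoorePenroseInverse_s14 a ap) (hg : IsGroupInverse_s14 a ag)
    (h : star a = ag) : ap = star a :=
  hp.unique (.star_of_mul_star_mul (by rw [h, hg.mul_inv_mul]))

theorem IsGroupInverse_s14.mul_star_inv_mul_eq_self (hg : IsGroupInverse_s14 a ag) (hstar : star a = ap)
    (hpg : ap = ag) : a * star ag * ap = a ∧ ap * a * a = a := by
  subst hstar hpg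
  exact ⟨by rw [_root_.star_star, hg.mul_mul_inv_self], hg.inv_mul_mul_self⟩

end

theorem stmt_14 (R : Type*) [Ring R] [StarRing R] (a ap ag : R)
    (h1 : a * ap * a = a) (h2 : ap * a * ap = ap)
    (h3 : star (a * ap) = a * ap) (h4 : star (ap * a) = ap * a)
    (g1 : a * ag * a = a) (g2 : ag * a * ag = ag) (g3 : a * ag = ag * a) :
    (star a = ap ∧ ap = ag) ↔ ((a * star ag * ap)^4 = (ap * a * a)^2 * (a * star ag * ap)^2 ∧ (a * star ag * ap)^6 = (ap * a * a)^3 * (a * star ag * ap)^3) := by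
  have hp : IsMoorePenroseInverse_s14 a ap := ⟨h1, h2, h3, h4⟩
  have hg : IsGroupInverse_s14 a ag := ⟨g1, g2, g3⟩
  constructor
  · rintro ⟨hstar, hpg⟩
    obtain ⟨hu, hc⟩ := hg.mul_star_inv_mul_eq_self hstar hpg
    rw [hu, hc, ← pow_add, ← pow_add]
    exact ⟨rfl, rfl⟩
  · rintro ⟨H2, H3⟩
    have hP : a * star a = ap * a * a * (a * star a) * star a :=
      eq_mul_mul_of_consecutive_pows (hp.mul_star_eq_of_pow_eq hg (k := 2) H2)
        (hp.mul_star_eq_of_pow_eq hg (k := 3) H3)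
    have hstar := hg.star_eq_of_mul_star_eq (hp.mul_star_eq_star_mul_star hg hP)
    have hpstar := hp.eq_star hg hstar
    exact ⟨hpstar.symm, hpstar.trans hstar⟩
end
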